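/- Let n ≡ 1 (mod 4) be an integer greater than 1, and r, s positive integers with r > s. Then, modulo Φ_{n^s}(q), the quotient (q^{n^s+1};q^4)_{(n^r-n^s)/4} / (q^{n^s+n};q^{4n})_{(n^{r-1}-n^{s-1})/4} is congruent to (q^{n^s+3};q^4)_{(n^r-n^s)/4} / (q^{n^s+3n};q^{4n})_{(n^{r-1}-n^{s-1})/4}, and this common value is not congruent to 0 modulo Φ_{n^s}(q). -/

import Mathlib

/-!
Since `4 ∣ n^(r-s) - 1`, the numerator has `n^s M` factors, `M = (n^(r-s) - 1)/4`, and the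
factors of the denominator are exactly those numerator factors `1 - q^(e+4i)` (`e = n^s+1` or
`n^s+3`) whose exponent is divisible by `n`. So the quotient is the polynomial formed by the other
factors. Divisibility by `Φ_{n^s}` means vanishing at a primitive `n^s`-th root of unity `ζ`, and
there, since `4` is invertible modulo `n^s`, the exponents `e + 4i` over `n^s` consecutive `i` run
once through every residue modulo `n^s`. Hence both quotients evaluate to
`(∏_{w < n^s, n ∤ w} (1 - ζ^w))^M`, which is not zero.
-/

open Finset Polynomial

/-- The q-shifted factorial `(a;Q)_k` in `ℚ(q)`. -/
noncomputable def poch (a Q : RatFunc ℚ) (k : ℕ) : RatFunc ℚ :=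
  ∏ i ∈ Finset.range k, (1 - a * Q ^ i)

namespace Function.Periodic

variable {M : Type*} [CommMonoid M] {f : ℕ → M} {N : ℕ}

theorem prod_range_mul (hf : Periodic f N) (m : ℕ) :
    ∏ i ∈ range (N * m), f i = (∏ i ∈ range N, f i) ^ m := by
  induction m with
  | zero => simp
  | succ m ih =>
    rw [Nat.mul_succ, prod_range_add, ih, pow_succ]
    congr 1
    refine prod_congr rfl fun i _ => ?_
    simpa [add_comm, mul_comm] using hf.nat_mul m i

theorem prod_range_affine (hf : Periodic f N) {a : ℕ} (ha : a.Coprime N) (u : ℕ) :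
    ∏ i ∈ range N, f (u + a * i) = ∏ i ∈ range N, f i := by
  rcases N.eq_zero_or_pos with rfl | hN
  · simp
  simp_rw [← hf.map_mod_nat (u + a * _)]
  have hmaps : ∀ i ∈ range N, (u + a * i) % N ∈ range N := fun i _ =>
    mem_range.2 (Nat.mod_lt _ hN)
  have hinj : Set.InjOn (fun i => (u + a * i) % N) (range N) := by
    intro i hi j hj hij
    have := Nat.ModEq.cancel_left_of_coprime (Nat.coprime_comm.1 ha)
      (Nat.ModEq.add_left_cancel' u hij)
    simpa [Nat.ModEq, Nat.mod_eq_of_lt (mem_range.1 hi), Nat.mod_eq_of_lt (mem_range.1 hj)]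
      using this
  exact prod_nbij _ hmaps hinj (surjOn_of_injOn_of_card_le _ hmaps hinj le_rfl) fun _ _ => rfl

end Function.Periodic

theorem Finset.prod_range_mul_eq_prod_residue_mul {M : Type*} [CommMonoid M] (g : ℕ → M)
    {n c : ℕ} (hc : c < n) (K : ℕ) :
    ∏ i ∈ range (n * K), g i
      = (∏ j ∈ range K, g (c + n * j)) * ∏ i ∈ range (n * K) with i % n ≠ c, g i := by
  rw [← prod_filter_mul_prod_filter_not (range (n * K)) (· % n = c)]
  congr 1
  symm
  refine prod_nbij' (fun j => c + n * j) (· / n) ?_ ?_ ?_ ?_ fun _ _ => rfl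
  · intro j hj
    simp only [mem_range] at hj
    simp only [mem_filter, mem_range]
    refine ⟨?_, ?_⟩
    · nlinarith
    · rw [Nat.add_mul_mod_self_left, Nat.mod_eq_of_lt hc]
  · intro i hi
    simp only [mem_filter, mem_range] at hi
    simp only [mem_range]
    exact Nat.div_lt_of_lt_mul hi.1
  · intro j _
    rw [Nat.add_mul_div_left _ _ (by omega), Nat.div_eq_of_lt hc, zero_add]
  · intro i hi
    rw [mem_filter] at hi
    conv_rhs => rw [← Nat.mod_add_div i n, hi.2]

theorem Nat.mod_eq_iff_dvd_add_mul {n a e c : ℕ} (ha : a.Coprime n) (hc : c < n)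
    (hdvd : n ∣ e + a * c) (i : ℕ) : i % n = c ↔ n ∣ e + a * i := by
  have hunit : IsUnit (a : ZMod n) := (ZMod.isUnit_iff_coprime a n).2 ha
  rw [← ZMod.natCast_eq_zero_iff] at hdvd ⊢
  rw [← Nat.mod_eq_of_lt hc, ← ZMod.natCast_eq_natCast_iff']
  push_cast at hdvd ⊢
  rw [← hunit.mul_right_inj, ← sub_eq_zero (b := (a : ZMod n) * c)]
  constructor <;> intro h
  · linear_combination h + hdvd
  · linear_combination h - hdvd

theorem aeval_prod_mod_ne {A R : Type*} [CommRing A] [CommRing R] [Algebra A R]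
    {N n a e c : ℕ} {ζ : R} (hζ : ζ ^ N = 1) (hnN : n ∣ N) (ha : a.Coprime N) (hc : c < n)
    (hdvd : n ∣ e + a * c) (M : ℕ) :
    aeval ζ (∏ i ∈ range (N * M) with i % n ≠ c, (1 - X ^ (e + a * i)) : A[X])
      = (∏ w ∈ range N with ¬ n ∣ w, (1 - ζ ^ w)) ^ M := by
  set g : ℕ → R := fun w => if n ∣ w then 1 else 1 - ζ ^ w
  have hg : Function.Periodic g N := fun w => by
    simp only [g, Nat.dvd_add_left hnN, pow_add, hζ, mul_one]
  have hgi : Function.Periodic (fun i => g (e + a * i)) N := fun i => by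
    simpa [mul_add, add_assoc] using hg.nat_mul a (e + a * i)
  calc aeval ζ (∏ i ∈ range (N * M) with i % n ≠ c, (1 - X ^ (e + a * i)) : A[X])
      = ∏ i ∈ range (N * M), g (e + a * i) := by
        rw [map_prod, prod_filter]
        refine prod_congr rfl fun i _ => ?_
        simp only [g, ← Nat.mod_eq_iff_dvd_add_mul (ha.coprime_dvd_right hnN) hc hdvd, ite_not,
          map_sub, map_one, map_pow, aeval_X]
    _ = (∏ i ∈ range N, g (e + a * i)) ^ M := hgi.prod_range_mul M
    _ = (∏ w ∈ range N, g w) ^ M := by rw [hg.prod_range_affine ha]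
    _ = (∏ w ∈ range N with ¬ n ∣ w, (1 - ζ ^ w)) ^ M := by
        simp only [g, prod_filter, ite_not]

theorem cyclotomic_dvd_iff_aeval_eq_zero {K : Type*} [Field K] [CharZero K] {N : ℕ} {ζ : K}
    (hζ : IsPrimitiveRoot ζ N) (hN : 0 < N) (p : ℚ[X]) :
    cyclotomic N ℚ ∣ p ↔ aeval ζ p = 0 := by
  rw [cyclotomic_eq_minpoly_rat hζ hN, minpoly.dvd_iff]

theorem prod_one_sub_pow_ne_zero {R : Type*} [CommRing R] [IsDomain R] {N n : ℕ} {ζ : R}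
    (hζ : IsPrimitiveRoot ζ N) (hnN : n ∣ N) :
    ∏ w ∈ range N with ¬ n ∣ w, (1 - ζ ^ w) ≠ 0 :=
  prod_ne_zero_iff.2 fun w hw => sub_ne_zero.2 fun h =>
    (mem_filter.1 hw).2 (hnN.trans ((hζ.pow_eq_one_iff_dvd w).1 h.symm))

theorem pow_sub_pow_div_four {n : ℕ} (hn : n % 4 = 1) {s r : ℕ} (hsr : s ≤ r) :
    (n ^ r - n ^ s) / 4 = n ^ s * ((n ^ (r - s) - 1) / 4) := by
  have h4 : 4 ∣ n ^ (r - s) - 1 := by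
    rw [← Nat.modEq_iff_dvd' (Nat.one_le_pow _ _ (by omega))]
    simpa using ((show n ≡ 1 [MOD 4] from hn).pow (r - s)).symm
  rw [← Nat.mul_div_assoc _ h4, Nat.mul_sub_one, ← pow_add, Nat.add_sub_cancel' hsr]

theorem poch_X_pow (e m k : ℕ) :
    poch (RatFunc.X ^ e) (RatFunc.X ^ m) k
      = algebraMap ℚ[X] (RatFunc ℚ) (∏ i ∈ range k, (1 - X ^ (e + m * i))) := by
  rw [poch, map_prod]
  refine prod_congr rfl fun i _ => ?_
  rw [map_sub, map_one, map_pow, RatFunc.algebraMap_X, pow_add, pow_mul]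

theorem poch_div_poch_eq_prod_mod_ne {e a n c f : ℕ} (he : 0 < e) (hc : c < n)
    (hf : e + a * c = f) (K : ℕ) :
    poch (RatFunc.X ^ e) (RatFunc.X ^ a) (n * K) / poch (RatFunc.X ^ f) (RatFunc.X ^ (a * n)) K
      = algebraMap ℚ[X] (RatFunc ℚ)
          (∏ i ∈ range (n * K) with i % n ≠ c, (1 - X ^ (e + a * i))) := by
  have hden : ∏ j ∈ range K, (1 - X ^ (f + a * n * j) : ℚ[X]) ≠ 0 :=
    prod_ne_zero_iff.2 fun j _ => by
      rw [← neg_ne_zero, neg_sub]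
      exact X_pow_sub_C_ne_zero (by omega) 1
  have hexp (j : ℕ) : e + a * (c + n * j) = f + a * n * j := by rw [← hf]; ring
  rw [poch_X_pow, poch_X_pow, prod_range_mul_eq_prod_residue_mul _ hc]
  simp_rw [hexp]
  rw [map_mul, mul_div_cancel_left₀ _ (RatFunc.algebraMap_ne_zero hden)]

theorem exists_poch_div_poch_eq_algebraMap {n r s e c f : ℕ} (hn4 : n % 4 = 1) (hs : 0 < s)
    (hsr : s ≤ r) (he : 0 < e) (hc : c < n) (hf : e + 4 * c = f) (hfn : n ∣ f)
    {R : Type*} [CommRing R] [Algebra ℚ R] {ζ : R} (hζ : ζ ^ n ^ s = 1) :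
    ∃ P : ℚ[X],
      poch (RatFunc.X ^ e) (RatFunc.X ^ 4) ((n ^ r - n ^ s) / 4)
          / poch (RatFunc.X ^ f) (RatFunc.X ^ (4 * n)) ((n ^ (r - 1) - n ^ (s - 1)) / 4)
        = algebraMap ℚ[X] (RatFunc ℚ) P
      ∧ aeval ζ P
        = (∏ w ∈ range (n ^ s) with ¬ n ∣ w, (1 - ζ ^ w)) ^ ((n ^ (r - s) - 1) / 4) := by
  have hns : n * n ^ (s - 1) = n ^ s := by rw [← pow_succ', Nat.sub_add_cancel hs]
  have hK : (n ^ r - n ^ s) / 4 = n * (n ^ (s - 1) * ((n ^ (r - s) - 1) / 4)) := by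
    rw [pow_sub_pow_div_four hn4 hsr, ← mul_assoc, hns]
  have hK' : (n ^ (r - 1) - n ^ (s - 1)) / 4 = n ^ (s - 1) * ((n ^ (r - s) - 1) / 4) := by
    rw [pow_sub_pow_div_four hn4 (by omega), show r - 1 - (s - 1) = r - s by omega]
  have hcop : Nat.Coprime 4 (n ^ s) := by
    refine Nat.Coprime.pow_right s ?_
    rw [Nat.Coprime, Nat.gcd_rec, hn4, Nat.gcd_one_left]
  refine ⟨_, by rw [hK, hK', poch_div_poch_eq_prod_mod_ne he hc hf], ?_⟩
  rw [← mul_assoc, hns]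
  exact aeval_prod_mod_ne hζ (dvd_pow_self n hs.ne') hcop hc (hf ▸ hfn) _

theorem stmt10_general (n r s : ℕ) (hn4 : n % 4 = 1) (hs : 0 < s) (hrs : s < r) :
    ((Polynomial.cyclotomic (n ^ s) ℚ) ∣
        (poch (RatFunc.X ^ (n ^ s + 1)) (RatFunc.X ^ 4) ((n ^ r - n ^ s) / 4)
            / poch (RatFunc.X ^ (n ^ s + n)) (RatFunc.X ^ (4 * n))
                ((n ^ (r - 1) - n ^ (s - 1)) / 4)
          - poch (RatFunc.X ^ (n ^ s + 3)) (RatFunc.X ^ 4) ((n ^ r - n ^ s) / 4)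
            / poch (RatFunc.X ^ (n ^ s + 3 * n)) (RatFunc.X ^ (4 * n))
                ((n ^ (r - 1) - n ^ (s - 1)) / 4)).num)
    ∧ ¬ ((Polynomial.cyclotomic (n ^ s) ℚ) ∣
        (poch (RatFunc.X ^ (n ^ s + 1)) (RatFunc.X ^ 4) ((n ^ r - n ^ s) / 4)
            / poch (RatFunc.X ^ (n ^ s + n)) (RatFunc.X ^ (4 * n))
                ((n ^ (r - 1) - n ^ (s - 1)) / 4)).num) := by
  have hN : 0 < n ^ s := pow_pos (by omega) s
  have hζ := Complex.isPrimitiveRoot_exp (n ^ s) hN.ne'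
  have hnN : n ∣ n ^ s := dvd_pow_self n hs.ne'
  obtain ⟨P₁, h₁, hP₁⟩ := exists_poch_div_poch_eq_algebraMap (e := n ^ s + 1)
    (c := (n - 1) / 4) hn4 hs hrs.le (by omega) (by omega) (by omega) (dvd_add hnN dvd_rfl)
    hζ.pow_eq_one
  obtain ⟨P₃, h₃, hP₃⟩ := exists_poch_div_poch_eq_algebraMap (e := n ^ s + 3)
    (c := (3 * n - 3) / 4) hn4 hs hrs.le (by omega) (by omega) (by omega)
    (dvd_add hnN (dvd_mul_left n 3)) hζ.pow_eq_one
  rw [h₁, h₃, ← map_sub, RatFunc.num_algebraMap, RatFunc.num_algebraMap,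
    cyclotomic_dvd_iff_aeval_eq_zero hζ hN, cyclotomic_dvd_iff_aeval_eq_zero hζ hN, map_sub,
    hP₁, hP₃]
  exact ⟨sub_self _, pow_ne_zero _ (prod_one_sub_pow_ne_zero hζ hnN)⟩

/-- for `n ≡ 1 (mod 4)`, `n > 1`, `r > s ≥ 1`,
`(q^{nˢ+1};q⁴)_{(nʳ-nˢ)/4}/(q^{nˢ+n};q⁴ⁿ)_{(nʳ⁻¹-nˢ⁻¹)/4}
 ≡ (q^{nˢ+3};q⁴)_{(nʳ-nˢ)/4}/(q^{nˢ+3n};q⁴ⁿ)_{(nʳ⁻¹-nˢ⁻¹)/4} (mod Φ_{nˢ}(q))`,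
and this common value is not `≡ 0 (mod Φ_{nˢ}(q))`. -/
theorem stmt10 (n r s : ℕ) (hn : 1 < n) (hn4 : n % 4 = 1) (hs : 0 < s) (hrs : s < r) :
    ((Polynomial.cyclotomic (n ^ s) ℚ) ∣
        (poch (RatFunc.X ^ (n ^ s + 1)) (RatFunc.X ^ 4) ((n ^ r - n ^ s) / 4)
            / poch (RatFunc.X ^ (n ^ s + n)) (RatFunc.X ^ (4 * n))
                ((n ^ (r - 1) - n ^ (s - 1)) / 4)
          - poch (RatFunc.X ^ (n ^ s + 3)) (RatFunc.X ^ 4) ((n ^ r - n ^ s) / 4)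
            / poch (RatFunc.X ^ (n ^ s + 3 * n)) (RatFunc.X ^ (4 * n))
                ((n ^ (r - 1) - n ^ (s - 1)) / 4)).num)
    ∧ ¬ ((Polynomial.cyclotomic (n ^ s) ℚ) ∣
        (poch (RatFunc.X ^ (n ^ s + 1)) (RatFunc.X ^ 4) ((n ^ r - n ^ s) / 4)
            / poch (RatFunc.X ^ (n ^ s + n)) (RatFunc.X ^ (4 * n))
                ((n ^ (r - 1) - n ^ (s - 1)) / 4)).num) :=
  stmt10_general n r s hn4 hs hrs
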